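/- If α : A → E_k A satisfies the two coalgebra equations (counit law: the last element of α(a) is a; comultiplication law: α(a_i) = [a_1,…,a_i] whenever α(a) = [a_1,…,a_j] and 1 ≤ i ≤ j), then α is injective and its image is a prefix-closed subset of the nonempty sequences over A of length ≤ k. -/

import Mathlib

/-- A relational signature: a set of relation symbols with arities. -/
structure Signature where
  symbols : Type
  arity : symbols → ℕ

/-- A relational structure for a signature `σ`. -/
structure Struct (σ : Signature) where
  carrier : Type
  rel : ∀ r : σ.symbols, (Fin (σ.arity r) → carrier) → Prop

/-- Homomorphisms of relational structures. -/
def IsHom {σ : Signature} (A B : Struct σ) (f : A.carrier → B.carrier) : Prop :=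
  ∀ r x, A.rel r x → B.rel r (fun i => f (x i))

/-- Nonempty sequences of length at most `k`. -/
def NESeq (A : Type) (k : ℕ) : Type := { l : List A // l ≠ [] ∧ l.length ≤ k }

/-- The last element of a nonempty sequence (the counit of the EF comonad). -/
def lastOf {A : Type} {k : ℕ} (s : NESeq A k) : A := s.1.getLast s.2.1

/-- Co-Kleisli coextension for the EF comonad: `f*[a₁,…,a_j] = [f[a₁],…,f[a₁,…,a_j]]`. -/
def coext {A B : Type} {k : ℕ} (f : NESeq A k → B) (s : NESeq A k) : NESeq B k :=
  ⟨(List.finRange s.1.length).map fun i =>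
      f ⟨s.1.take (i.1 + 1), by
        have h1 := i.2
        have h2 := s.2.2
        constructor
        · apply List.ne_nil_of_length_pos
          simp [List.length_take] <;> omega
        · simp [List.length_take]; omega⟩, by
    have h1 := s.2.1
    have h2 := s.2.2
    constructor
    · apply List.ne_nil_of_length_pos
      simp only [List.length_map, List.length_finRange]
      first
        | exact List.length_pos_iff.mpr h1
        | exact List.length_pos_of_ne_nil h1
        | (cases hs : s.1 with
            | nil => exact absurd hs h1
            | cons _ _ => simp)
    · simpa using h2⟩

/-- The Ehrenfeucht–Fraïssé comonad on structures: the universe of `EF k A` consists of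
nonempty sequences of length ≤ k over `A`, and a relation holds of a tuple of sequences
iff they are pairwise prefix-comparable and the relation holds in `A` of their last
elements. -/
def EF {σ : Signature} (k : ℕ) (A : Struct σ) : Struct σ where
  carrier := NESeq A.carrier k
  rel r x := (∀ i j, (x i).1 <+: (x j).1 ∨ (x j).1 <+: (x i).1) ∧
    A.rel r (fun i => lastOf (x i))

/-- The Gaifman graph of a structure. -/
def gaifman {σ : Signature} (A : Struct σ) (a a' : A.carrier) : Prop :=
  a ≠ a' ∧ ∃ (r : σ.symbols) (x : Fin (σ.arity r) → A.carrier) (i j : Fin (σ.arity r)),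
    A.rel r x ∧ x i = a ∧ x j = a' ∧ i ≠ j

/-- `α : A → E_k A` is a coalgebra for the EF comonad: it is a homomorphism satisfying
the counit and comultiplication laws. -/
def IsEFCoalg {σ : Signature} (k : ℕ) (A : Struct σ) (α : A.carrier → NESeq A.carrier k) : Prop :=
  IsHom A (EF k A) α ∧
  (∀ a, lastOf (α a) = a) ∧
  (∀ (a : A.carrier) (i : ℕ) (h : i < (α a).1.length),
      (α ((α a).1.get ⟨i, h⟩)).1 = (α a).1.take (i + 1))

/-- A forest cover of height ≤ k of a graph `(V, adj)`: a forest order in which the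
predecessors of any element form a chain of size ≤ k, and adjacent vertices are
comparable. -/
structure ForestCover (V : Type) (adj : V → V → Prop) (k : ℕ) where
  le : V → V → Prop
  le_refl : ∀ a, le a a
  le_antisymm : ∀ a b, le a b → le b a → a = b
  le_trans : ∀ a b c, le a b → le b c → le a c
  pred_chain : ∀ a b c, le b a → le c a → le b c ∨ le c b
  pred_finite : ∀ a, {b | le b a}.Finite
  height : ∀ a, {b | le b a}.ncard ≤ k
  cover : ∀ a b, adj a b → le a b ∨ le b a

theorem List.IsPrefix.exists_eq_take_succ {α : Type*} {s l : List α} (hs : s <+: l)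
    (hne : s ≠ []) : ∃ (i : ℕ) (_ : i < l.length), s = l.take (i + 1) := by
  have hpos : 0 < s.length := List.length_pos_iff.mpr hne
  refine ⟨s.length - 1, by have := hs.length_le; omega, ?_⟩
  rw [Nat.sub_add_cancel hpos]
  exact List.prefix_iff_eq_take.mp hs

/-- If `α : A → E_k A` satisfies the two coalgebra equations (the last
element of `α a` is `a`, and `α` applied to the `i`-th element of `α a` is the length
`i+1` prefix of `α a`), then `α` is injective and its image is closed under nonempty
prefixes. -/
theorem coalg_injective_prefixClosed {A : Type} {k : ℕ}
    (α : A → NESeq A k)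
    (hcounit : ∀ a, lastOf (α a) = a)
    (hcomult : ∀ (a : A) (i : ℕ) (h : i < (α a).1.length),
        (α ((α a).1.get ⟨i, h⟩)).1 = (α a).1.take (i + 1)) :
    Function.Injective α ∧
    (∀ (a : A) (s : List A), s <+: (α a).1 → s ≠ [] → ∃ b : A, (α b).1 = s) := by
  refine ⟨Function.LeftInverse.injective hcounit, fun a s hs hne => ?_⟩
  obtain ⟨i, hi, rfl⟩ := hs.exists_eq_take_succ hne
  exact ⟨_, hcomult a i hi⟩
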